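/- Define for Re(ε) < 0 the typical quantum dimension T(λ) = q_ε^{2λ−α₀} · sin(−πα₊εi)/sin(πα₋εi), q_ε = e^{πε}. Then T(λ)·T(μ) = ∑_{ℓ=0}^{p−1} T(λ + μ + ℓα₋). -/

import Mathlib

/-!
Put `t = π ε α₋`. Since `α₊ = -p α₋` and `-α₀ = (p - 1) α₋`, and `sin (x i) = i sinh x`,
`T(0) = e^{(p-1)t} sinh (p t) / sinh t = ∑_{ℓ<p} e^{2ℓt}` is a `q`-integer; the denominator
does not vanish because `Re t > 0`. As `T(λ + ν) = e^{2πεν} T(λ)`, expanding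
`T(μ) = e^{2πεμ} T(0) = ∑_{ℓ<p} e^{2πε(μ + ℓα₋)}` turns `T(λ) T(μ)` into `∑_{ℓ<p} T(λ + μ + ℓα₋)`.
-/

open Complex

/-- `α₊ = √(2p)`. -/
noncomputable def alphaP (p : ℕ) : ℂ := (Real.sqrt (2 * p) : ℝ)

/-- `α₋ = −√(2/p)`. -/
noncomputable def alphaM (p : ℕ) : ℂ := -(Real.sqrt (2 / p) : ℝ)

/-- `α₀ = α₊ + α₋`. -/
noncomputable def alpha0 (p : ℕ) : ℂ := alphaP p + alphaM p

/-- Typical quantum dimension `T(λ) = q_ε^{2λ−α₀} sin(−πα₊εi)/sin(πα₋εi)`, `q_ε = e^{πε}`. -/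
noncomputable def qdimF (p : ℕ) (ε lam : ℂ) : ℂ :=
  Complex.exp ((Real.pi : ℂ) * ε * (2 * lam - alpha0 p)) *
    Complex.sin (-(Real.pi : ℂ) * alphaP p * ε * I) / Complex.sin ((Real.pi : ℂ) * alphaM p * ε * I)

lemma alphaP_eq_neg_mul_alphaM (p : ℕ) : alphaP p = -(p : ℂ) * alphaM p := by
  have h : Real.sqrt (2 * p) = p * Real.sqrt (2 / p) := by
    rcases Nat.eq_zero_or_pos p with rfl | hp
    · simp
    rw [show 2 * (p : ℝ) = (p : ℝ) ^ 2 * (2 / p) by field_simp, Real.sqrt_mul (sq_nonneg _),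
      Real.sqrt_sq (Nat.cast_nonneg p)]
  simp [alphaP, alphaM, h]

lemma alpha0_eq (p : ℕ) : alpha0 p = -((p : ℂ) - 1) * alphaM p := by
  rw [alpha0, alphaP_eq_neg_mul_alphaM]
  ring

lemma alphaM_im (p : ℕ) : (alphaM p).im = 0 := by
  simp [alphaM]

lemma alphaM_re_neg {p : ℕ} (hp : p ≠ 0) : (alphaM p).re < 0 := by
  simp only [alphaM, neg_re, ofReal_re, neg_lt_zero]
  positivity

open scoped Real

namespace Complex

lemma sinh_ne_zero_of_re_ne_zero {t : ℂ} (ht : t.re ≠ 0) : sinh t ≠ 0 := by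
  intro h
  have hexp : exp t = exp (-t) := by rw [← sub_eq_zero, ← two_sinh, h, mul_zero]
  have := congrArg norm hexp
  simp only [norm_exp, neg_re, Real.exp_eq_exp] at this
  exact ht (by linarith)

lemma exp_mul_sinh_div_sinh_eq_sum (n : ℕ) {t : ℂ} (ht : sinh t ≠ 0) :
    exp (((n : ℂ) - 1) * t) * sinh (n * t) / sinh t =
      ∑ l ∈ Finset.range n, exp (2 * (l * t)) := by
  set u := exp t with hu
  have hu0 : u ≠ 0 := exp_ne_zero t
  have hgeom : (∑ l ∈ Finset.range n, (u ^ 2) ^ l) * (u ^ 2 - 1) = (u ^ 2) ^ n - 1 :=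
    geom_sum_mul _ _
  have hterm : ∀ l : ℕ, exp (2 * (l * t)) = (u ^ 2) ^ l := fun l ↦ by
    rw [← pow_mul, hu, ← exp_nat_mul]
    push_cast
    ring_nf
  have hpow : exp (n * t) = u ^ n := exp_nat_mul t n
  have hshift : exp (((n : ℂ) - 1) * t) = u ^ n * u⁻¹ := by
    rw [sub_mul, one_mul, exp_sub, hpow, div_eq_mul_inv]
  have hsinh : ∀ z, sinh z = (exp z - (exp z)⁻¹) / 2 := fun z ↦ by
    rw [sinh, exp_neg]
  simp only [hterm]
  rw [div_eq_iff ht, hshift, hsinh, hsinh t, hpow, ← hu]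
  field_simp
  linear_combination -hgeom

end Complex

lemma qdimF_add (p : ℕ) (ε lam ν : ℂ) :
    qdimF p ε (lam + ν) = exp (2 * π * ε * ν) * qdimF p ε lam := by
  rw [qdimF, qdimF, mul_div_assoc, mul_div_assoc, ← mul_assoc, ← exp_add]
  congr 2
  ring

lemma qdimF_zero_eq_sum {p : ℕ} (hp : p ≠ 0) {ε : ℂ} (hε : ε.re < 0) :
    qdimF p ε 0 = ∑ l ∈ Finset.range p, exp (2 * π * ε * (l * alphaM p)) := by
  set t := π * ε * alphaM p with ht
  have hsinh : sinh t ≠ 0 := by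
    refine sinh_ne_zero_of_re_ne_zero (ne_of_gt ?_)
    simp only [ht, mul_re, ofReal_re, ofReal_im, alphaM_im, mul_zero, zero_mul, sub_zero]
    exact mul_pos_of_neg_of_neg (mul_neg_of_pos_of_neg Real.pi_pos hε) (alphaM_re_neg hp)
  have hexp : π * ε * (2 * 0 - alpha0 p) = ((p : ℂ) - 1) * t := by
    rw [alpha0_eq, ht]; ring
  have hsin_num : sin (-π * alphaP p * ε * I) = sinh (p * t) * I := by
    rw [alphaP_eq_neg_mul_alphaM, ← sin_mul_I, ht]; congr 1; ring
  have hsin_den : sin (π * alphaM p * ε * I) = sinh t * I := by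
    rw [← sin_mul_I, ht]; congr 1; ring
  rw [qdimF, hexp, hsin_num, hsin_den, mul_div_assoc, mul_div_mul_right _ _ I_ne_zero,
    ← mul_div_assoc, exp_mul_sinh_div_sinh_eq_sum p hsinh]
  refine Finset.sum_congr rfl fun l _ ↦ ?_
  rw [ht]; congr 1; ring

theorem stmt18 (p : ℕ) (hp : 2 ≤ p) (ε : ℂ) (hε : ε.re < 0) (lam μ : ℂ) :
    qdimF p ε lam * qdimF p ε μ =
      ∑ l ∈ Finset.range p, qdimF p ε (lam + μ + (l : ℂ) * alphaM p) := by
  have hμ : qdimF p ε μ =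
      ∑ l ∈ Finset.range p, exp (2 * π * ε * μ) * exp (2 * π * ε * (l * alphaM p)) := by
    rw [← Finset.mul_sum, ← qdimF_zero_eq_sum (by omega) hε, ← qdimF_add, zero_add]
  rw [hμ, Finset.mul_sum]
  refine Finset.sum_congr rfl fun l _ ↦ ?_
  rw [add_assoc, qdimF_add, mul_add, exp_add]
  ring
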